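/- Let ρ(θ) be the 2×2 mixed state wρ₁(θ) + (1−w)ρ₂(θ) with constant w ∈ (0,1), w ≠ 1/2, ψ₁ ⊥ ψ₂ orthonormal, and suppose a positive semidefinite Hermitian matrix m satisfies the attainability equation k^{1/2} m^{1/2} ρ^{1/2} = m^{1/2} ρ_{//θ} ρ^{1/2} for some real k ≥ 0, where ρ_{//θ} = (2w−1)·2ρ₁_{/θ} and I₁(θ) > 0. Then m has rank at most one, i.e., m = c|γ⟩⟨γ| for some unit vector γ ∈ ℂ² and c ≥ 0. -/

import Mathlib

open Matrix
open scoped ComplexOrder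


lemma aux_res_id (a b : Fin 2 → ℂ) (ha : star a ⬝ᵥ a = 1) (hb : star b ⬝ᵥ b = 1)
    (hab : star a ⬝ᵥ b = 0) :
    vecMulVec a (star a) + vecMulVec b (star b) = 1 := by
  set U : Matrix (Fin 2) (Fin 2) ℂ := Matrix.of fun i j => if j = 0 then a i else b i with hU
  have hba : star b ⬝ᵥ a = 0 := by
    have := congrArg star hab
    rwa [star_dotProduct, star_star, star_zero] at this
  have h1 : Uᴴ * U = 1 := by
    ext i j
    fin_cases i <;> fin_cases j <;>
      simpa [hU, Matrix.mul_apply, Fin.sum_univ_two, Matrix.one_apply, dotProduct,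
        Fin.sum_univ_two] using by
          first
          | simpa [dotProduct, Fin.sum_univ_two] using ha
          | simpa [dotProduct, Fin.sum_univ_two] using hab
          | simpa [dotProduct, Fin.sum_univ_two] using hba
          | simpa [dotProduct, Fin.sum_univ_two] using hb
  have h2 : U * Uᴴ = 1 := mul_eq_one_comm.mp h1
  ext i j
  have := congrFun (congrFun h2 i) j
  simpa [hU, Matrix.mul_apply, Fin.sum_univ_two, Matrix.vecMulVec_apply, mul_comm] using this

lemma aux_sq_traceless (A : Matrix (Fin 2) (Fin 2) ℂ) (h : A.trace = 0) :
    A * A = ((A * A).trace / 2) • 1 := by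
  have h11 : A 1 1 = -A 0 0 := by
    have : A 0 0 + A 1 1 = 0 := by simpa [Matrix.trace, Fin.sum_univ_two] using h
    linear_combination this
  ext i j
  fin_cases i <;> fin_cases j <;>
    simp [Matrix.mul_apply, Matrix.trace, Fin.sum_univ_two, h11, Matrix.one_apply,
      Matrix.smul_apply] <;> ring

lemma aux_mul_vecMulVec (M : Matrix (Fin 2) (Fin 2) ℂ) (x y : Fin 2 → ℂ) :
    M * vecMulVec x y = vecMulVec (M.mulVec x) y := by
  ext i j
  simp [Matrix.mul_apply, Matrix.vecMulVec_apply, Matrix.mulVec, dotProduct,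
    Finset.sum_mul, mul_assoc, Fin.sum_univ_two]
  fin_cases i <;> simp <;> ring

lemma aux_vecMulVec_mulVec (a u x : Fin 2 → ℂ) :
    (vecMulVec a u).mulVec x = (u ⬝ᵥ x) • a := by
  ext i
  simp [Matrix.vecMulVec_apply, Matrix.mulVec, dotProduct, Finset.mul_sum, mul_assoc,
    Fin.sum_univ_two, mul_comm]
  ring

lemma aux_vecMulVec_mul (a u b v2 : Fin 2 → ℂ) :
    vecMulVec a u * vecMulVec b v2 = (u ⬝ᵥ b) • vecMulVec a v2 := by
  ext i j
  simp [Matrix.mul_apply, Matrix.vecMulVec_apply, dotProduct, Fin.sum_univ_two]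
  ring

lemma aux_smul_vecMulVec (c : ℂ) (a u : Fin 2 → ℂ) :
    vecMulVec (c • a) u = c • vecMulVec a u := by
  ext i j
  simp [Matrix.vecMulVec_apply, mul_assoc]

/-- In the mixed-state model with constant weight w ∈ (0,1), w ≠ 1/2, any PSD
measurement matrix m satisfying the attainability equation
k^{1/2} m^{1/2} ρ^{1/2} = m^{1/2} ρ_{//θ} ρ^{1/2} has rank at most one:
m = c|γ⟩⟨γ| for some unit vector γ and c ≥ 0. -/
theorem attaining_measurement_rank_one (ψ₁ ψ₂ : ℝ → Fin 2 → ℂ) (θ : ℝ)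
    (hnorm₁ : ∀ t, star (ψ₁ t) ⬝ᵥ ψ₁ t = 1)
    (hnorm₂ : ∀ t, star (ψ₂ t) ⬝ᵥ ψ₂ t = 1)
    (horth : ∀ t, star (ψ₁ t) ⬝ᵥ ψ₂ t = 0)
    (w : ℝ) (hw0 : 0 < w) (hw1 : w < 1) (hwhalf : w ≠ 1/2)
    (ρ₁ ρ₂ ρ : ℝ → Matrix (Fin 2) (Fin 2) ℂ)
    (hρ₁ : ∀ t, ρ₁ t = vecMulVec (ψ₁ t) (star (ψ₁ t)))
    (hρ₂ : ∀ t, ρ₂ t = vecMulVec (ψ₂ t) (star (ψ₂ t)))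
    (hρ : ∀ t, ρ t = (w : ℂ) • ρ₁ t + ((1 - w : ℝ) : ℂ) • ρ₂ t)
    (ρ₁' : Matrix (Fin 2) (Fin 2) ℂ)
    (hρ₁' : ∀ i j, HasDerivAt (fun t => ρ₁ t i j) (ρ₁' i j) θ)
    (I₁ : ℝ) (hI₁pos : 0 < I₁) (hI₁ : (2 : ℂ) * (ρ₁' ^ 2).trace = (I₁ : ℂ))
    (hψ₂ : ψ₂ θ = (((Real.sqrt I₁)⁻¹ : ℝ) : ℂ) • ((2 : ℂ) • ρ₁').mulVec (ψ₁ θ))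
    (L : Matrix (Fin 2) (Fin 2) ℂ)
    (hL : L = ((2 * w - 1 : ℝ) : ℂ) • ((2 : ℂ) • ρ₁'))
    (m mhalf ρhalf : Matrix (Fin 2) (Fin 2) ℂ)
    (hm : m.PosSemidef) (hmherm : m.IsHermitian)
    (hmhalf : mhalf.PosSemidef ∧ mhalf ^ 2 = m)
    (hρhalf : ρhalf.PosSemidef ∧ ρhalf ^ 2 = ρ θ)
    (k : ℝ) (hk : 0 ≤ k)
    (hattain : ((Real.sqrt k : ℝ) : ℂ) • (mhalf * ρhalf) = mhalf * L * ρhalf) :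
    ∃ (γ : Fin 2 → ℂ) (c : ℝ), star γ ⬝ᵥ γ = 1 ∧ 0 ≤ c ∧
      m = (c : ℂ) • vecMulVec γ (star γ) := by
  set a := ψ₁ θ with ha_def
  set b := ψ₂ θ with hb_def
  set D : Matrix (Fin 2) (Fin 2) ℂ := (2 : ℂ) • ρ₁' with hD_def
  have hsI : Real.sqrt I₁ ≠ 0 := ne_of_gt (Real.sqrt_pos.mpr hI₁pos)
  have hba : star b ⬝ᵥ a = 0 := by
    have := congrArg star (horth θ)
    rwa [star_dotProduct, star_star, star_zero] at this
  -- D a = √I₁ • b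
  have hDa : D.mulVec a = ((Real.sqrt I₁ : ℝ) : ℂ) • b := by
    rw [hψ₂, smul_smul]
    have : ((Real.sqrt I₁ : ℝ) : ℂ) * (((Real.sqrt I₁)⁻¹ : ℝ) : ℂ) = 1 := by
      push_cast
      field_simp
    rw [this, one_smul]
  -- trace ρ₁' = 0
  have htr : ρ₁'.trace = 0 := by
    have h1 : HasDerivAt (fun t => ρ₁ t 0 0 + ρ₁ t 1 1) (ρ₁' 0 0 + ρ₁' 1 1) θ :=
      (hρ₁' 0 0).add (hρ₁' 1 1)
    have h2 : (fun t => ρ₁ t 0 0 + ρ₁ t 1 1) = fun _ => (1 : ℂ) := by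
      funext t
      have hn := hnorm₁ t
      simp only [dotProduct, Fin.sum_univ_two, Pi.star_apply, RCLike.star_def] at hn
      rw [hρ₁]
      simp only [Matrix.vecMulVec_apply, Pi.star_apply, RCLike.star_def]
      linear_combination hn
    rw [h2] at h1
    have h3 : ρ₁' 0 0 + ρ₁' 1 1 = 0 := h1.unique (hasDerivAt_const θ (1 : ℂ))
    simpa [Matrix.trace, Fin.sum_univ_two] using h3
  -- D * D = I₁ • 1
  have hDD : D * D = ((I₁ : ℝ) : ℂ) • 1 := by
    have hsq := aux_sq_traceless ρ₁' htr
    have htr2 : (ρ₁' * ρ₁').trace = (I₁ : ℂ) / 2 := by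
      have : (ρ₁' ^ 2) = ρ₁' * ρ₁' := sq ρ₁'
      rw [this] at hI₁
      field_simp
      linear_combination hI₁
    rw [htr2] at hsq
    rw [hD_def, smul_mul_smul_comm, hsq, smul_smul]
    congr 1
    push_cast
    ring
  -- D b = √I₁ • a
  have hDb : D.mulVec b = ((Real.sqrt I₁ : ℝ) : ℂ) • a := by
    rw [hψ₂, Matrix.mulVec_smul, Matrix.mulVec_mulVec, hDD]
    rw [Matrix.smul_mulVec, Matrix.one_mulVec, smul_smul]
    have : (((Real.sqrt I₁)⁻¹ : ℝ) : ℂ) * ((I₁ : ℝ) : ℂ) = ((Real.sqrt I₁ : ℝ) : ℂ) := by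
      rw [← Complex.ofReal_mul]
      congr 1
      rw [← Real.mul_self_sqrt hI₁pos.le]
      field_simp
      rw [Real.sqrt_sq (Real.sqrt_nonneg _)]
    rw [this]
  -- resolution of identity and invertibility of ρ θ
  set P := vecMulVec a (star a) with hP_def
  set Q := vecMulVec b (star b) with hQ_def
  have hPQ : P + Q = 1 := aux_res_id a b (hnorm₁ θ) (hnorm₂ θ) (horth θ)
  have hρθ : ρ θ = (w : ℂ) • P + ((1 - w : ℝ) : ℂ) • Q := by
    rw [hρ, hρ₁, hρ₂]
  have hw0' : (w : ℂ) ≠ 0 := by exact_mod_cast ne_of_gt hw0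
  have hw1' : ((1 - w : ℝ) : ℂ) ≠ 0 := by
    exact_mod_cast ne_of_gt (by linarith : (0:ℝ) < 1 - w)
  have hinv : ρ θ * (((w⁻¹ : ℝ) : ℂ) • P + (((1 - w)⁻¹ : ℝ) : ℂ) • Q) = 1 := by
    rw [hρθ]
    rw [add_mul, mul_add, mul_add]
    rw [smul_mul_smul_comm, smul_mul_smul_comm, smul_mul_smul_comm, smul_mul_smul_comm]
    rw [hP_def, hQ_def, aux_vecMulVec_mul, aux_vecMulVec_mul, aux_vecMulVec_mul,
      aux_vecMulVec_mul, hnorm₁ θ, hnorm₂ θ, horth θ, hba]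
    simp only [one_smul, zero_smul, smul_zero, add_zero, zero_add]
    have e1 : (w : ℂ) * ((w⁻¹ : ℝ) : ℂ) = 1 := by
      push_cast; field_simp
    have e2 : ((1 - w : ℝ) : ℂ) * (((1 - w)⁻¹ : ℝ) : ℂ) = 1 := by
      push_cast
      have : (1 : ℂ) - (w:ℂ) ≠ 0 := by push_cast at hw1' ⊢; exact hw1'
      field_simp
    rw [e1, e2, one_smul, one_smul, ← hP_def, ← hQ_def, hPQ]
  have hρdet : IsUnit (ρ θ).det := by
    have := invertibleOfRightInverse _ _ hinv
    exact (Matrix.isUnit_iff_isUnit_det _).mp (isUnit_of_invertible _)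
  -- ρhalf is invertible
  have hρhdet : IsUnit ρhalf.det := by
    have h2 : ρhalf.det * ρhalf.det = (ρ θ).det := by
      rw [← Matrix.det_mul, ← sq, hρhalf.2]
    rw [← h2] at hρdet
    exact isUnit_of_mul_isUnit_left hρdet
  -- cancel ρhalf in the attainability equation
  have hML : mhalf * L = ((Real.sqrt k : ℝ) : ℂ) • mhalf := by
    calc mhalf * L = mhalf * L * (ρhalf * ρhalf⁻¹) := by
          rw [Matrix.mul_nonsing_inv _ hρhdet, mul_one]
      _ = (mhalf * L * ρhalf) * ρhalf⁻¹ := by rw [← mul_assoc]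
      _ = (((Real.sqrt k : ℝ) : ℂ) • (mhalf * ρhalf)) * ρhalf⁻¹ := by rw [hattain]
      _ = ((Real.sqrt k : ℝ) : ℂ) • (mhalf * (ρhalf * ρhalf⁻¹)) := by
          rw [smul_mul_assoc, mul_assoc]
      _ = ((Real.sqrt k : ℝ) : ℂ) • mhalf := by
          rw [Matrix.mul_nonsing_inv _ hρhdet, mul_one]
  -- eigenvectors of L
  set s : ℝ := (2 * w - 1) * Real.sqrt I₁ with hs_def
  have hs : s ≠ 0 := by
    apply mul_ne_zero _ hsI
    intro h
    apply hwhalf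
    linarith
  have hLp : L.mulVec (a + b) = ((s : ℝ) : ℂ) • (a + b) := by
    rw [hL, Matrix.smul_mulVec, Matrix.mulVec_add, hDa, hDb]
    funext i
    simp only [Pi.smul_apply, Pi.add_apply, smul_eq_mul, hs_def]
    push_cast
    ring
  have hLm : L.mulVec (a - b) = ((-s : ℝ) : ℂ) • (a - b) := by
    rw [hL, Matrix.smul_mulVec, Matrix.mulVec_sub, hDa, hDb]
    funext i
    simp only [Pi.smul_apply, Pi.sub_apply, smul_eq_mul, hs_def]
    push_cast
    ring
  have key : ∀ (v : Fin 2 → ℂ) (lam : ℂ), L.mulVec v = lam • v →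
      (lam - ((Real.sqrt k : ℝ) : ℂ)) • mhalf.mulVec v = 0 := by
    intro v lam hv
    have h1 : mhalf.mulVec (L.mulVec v) = ((Real.sqrt k : ℝ) : ℂ) • mhalf.mulVec v := by
      rw [Matrix.mulVec_mulVec, hML, Matrix.smul_mulVec]
    rw [hv, Matrix.mulVec_smul] at h1
    rw [sub_smul, h1, sub_self]
  -- find a unit vector annihilated by mhalf
  have hnv : ∃ v₀ : Fin 2 → ℂ, mhalf.mulVec v₀ = 0 ∧ star v₀ ⬝ᵥ v₀ = 2 := by
    by_cases hc : ((s : ℝ) : ℂ) = ((Real.sqrt k : ℝ) : ℂ)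
    · refine ⟨a - b, ?_, ?_⟩
      · have h := key (a - b) ((-s : ℝ) : ℂ) hLm
        have hne : ((-s : ℝ) : ℂ) - ((Real.sqrt k : ℝ) : ℂ) ≠ 0 := by
          rw [← hc]
          intro h0
          apply hs
          have h1 : (-s : ℝ) = s := by exact_mod_cast sub_eq_zero.mp h0
          linarith
        exact (smul_eq_zero.mp h).resolve_left hne
      · simp only [star_sub, sub_dotProduct, dotProduct_sub,
          (hnorm₁ θ : star a ⬝ᵥ a = 1), (hnorm₂ θ : star b ⬝ᵥ b = 1),
          (horth θ : star a ⬝ᵥ b = 0), hba, ← ha_def, ← hb_def]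
        have e1 : star a ⬝ᵥ a = 1 := hnorm₁ θ
        have e2 : star b ⬝ᵥ b = 1 := hnorm₂ θ
        have e3 : star a ⬝ᵥ b = 0 := horth θ
        have e4 := hba
        linear_combination e1 + e2 - e3
    · refine ⟨a + b, ?_, ?_⟩
      · have h := key (a + b) ((s : ℝ) : ℂ) hLp
        have hne : ((s : ℝ) : ℂ) - ((Real.sqrt k : ℝ) : ℂ) ≠ 0 := sub_ne_zero.mpr hc
        exact (smul_eq_zero.mp h).resolve_left hne
      · simp only [star_add, add_dotProduct, dotProduct_add,
          (hnorm₁ θ : star a ⬝ᵥ a = 1), (hnorm₂ θ : star b ⬝ᵥ b = 1),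
          (horth θ : star a ⬝ᵥ b = 0), hba, ← ha_def, ← hb_def]
        have e1 : star a ⬝ᵥ a = 1 := hnorm₁ θ
        have e2 : star b ⬝ᵥ b = 1 := hnorm₂ θ
        have e3 : star a ⬝ᵥ b = 0 := horth θ
        have e4 := hba
        linear_combination e1 + e2 + e3
  obtain ⟨v₀, hv₀, hv₀n⟩ := hnv
  set c2 : ℂ := (((Real.sqrt 2)⁻¹ : ℝ) : ℂ) with hc2_def
  set v : Fin 2 → ℂ := c2 • v₀ with hv_def
  have hvm : m.mulVec v = 0 := by
    have hm2 : m = mhalf * mhalf := by rw [← hmhalf.2, sq]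
    rw [hm2, ← Matrix.mulVec_mulVec, hv_def, Matrix.mulVec_smul, hv₀, smul_zero,
      Matrix.mulVec_zero]
  have hvn : star v ⬝ᵥ v = 1 := by
    have h1 : star v ⬝ᵥ v = c2 * (c2 * (star v₀ ⬝ᵥ v₀)) := by
      rw [hv_def, star_smul, smul_dotProduct, dotProduct_smul]
      simp [hc2_def, Complex.conj_ofReal]
    rw [h1, hv₀n, hc2_def]
    have h2 : ((Real.sqrt 2)⁻¹ : ℝ) * (((Real.sqrt 2)⁻¹ : ℝ) * 2) = 1 := by
      rw [show (2 : ℝ) = Real.sqrt 2 * Real.sqrt 2 from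
        (Real.mul_self_sqrt (by norm_num)).symm]
      have : Real.sqrt 2 ≠ 0 := by positivity
      field_simp
      rw [Real.sqrt_sq (by positivity)]
    calc (((Real.sqrt 2)⁻¹ : ℝ) : ℂ) * ((((Real.sqrt 2)⁻¹ : ℝ) : ℂ) * 2)
        = ((((Real.sqrt 2)⁻¹ : ℝ) * (((Real.sqrt 2)⁻¹ : ℝ) * 2) : ℝ) : ℂ) := by push_cast; ring
      _ = 1 := by rw [h2]; norm_num
  -- construct γ
  set γ : Fin 2 → ℂ := ![-(starRingEnd ℂ) (v 1), (starRingEnd ℂ) (v 0)] with hγ_def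
  have hvn' : (starRingEnd ℂ) (v 0) * v 0 + (starRingEnd ℂ) (v 1) * v 1 = 1 := by
    simpa [dotProduct, Fin.sum_univ_two] using hvn
  have hγn : star γ ⬝ᵥ γ = 1 := by
    simp only [hγ_def, dotProduct, Fin.sum_univ_two, Pi.star_apply, Matrix.cons_val_zero,
      Matrix.cons_val_one, Matrix.head_cons, RCLike.star_def, map_neg, Complex.conj_conj]
    linear_combination hvn'
  have hvγ : star v ⬝ᵥ γ = 0 := by
    simp only [hγ_def, dotProduct, Fin.sum_univ_two, Pi.star_apply, Matrix.cons_val_zero,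
      Matrix.cons_val_one, Matrix.head_cons, RCLike.star_def]
    ring
  have res : vecMulVec v (star v) + vecMulVec γ (star γ) = 1 := aux_res_id v γ hvn hγn hvγ
  have hvmul : Matrix.vecMul (star v) m = 0 := by
    have h1 := congrArg star hvm
    rw [Matrix.star_mulVec, hmherm.eq, star_zero] at h1
    exact h1
  have hdot : star v ⬝ᵥ m.mulVec γ = 0 := by
    rw [Matrix.dotProduct_mulVec, hvmul, zero_dotProduct]
  have hmγ : m.mulVec γ = (star γ ⬝ᵥ m.mulVec γ) • γ := by
    have h1 : m.mulVec γ = (1 : Matrix (Fin 2) (Fin 2) ℂ).mulVec (m.mulVec γ) := by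
      rw [Matrix.one_mulVec]
    rw [← res, Matrix.add_mulVec, aux_vecMulVec_mulVec, aux_vecMulVec_mulVec, hdot,
      zero_smul, zero_add] at h1
    exact h1
  have hsplit : m = vecMulVec (m.mulVec γ) (star γ) := by
    calc m = m * 1 := (mul_one m).symm
      _ = m * (vecMulVec v (star v) + vecMulVec γ (star γ)) := by rw [res]
      _ = vecMulVec (m.mulVec v) (star v) + vecMulVec (m.mulVec γ) (star γ) := by
          rw [mul_add, aux_mul_vecMulVec, aux_mul_vecMulVec]
      _ = vecMulVec (m.mulVec γ) (star γ) := by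
          rw [hvm]
          have : vecMulVec (0 : Fin 2 → ℂ) (star v) = 0 := by
            ext i j; simp [Matrix.vecMulVec_apply]
          rw [this, zero_add]
  set cC : ℂ := star γ ⬝ᵥ m.mulVec γ with hcC_def
  have hcC : 0 ≤ cC := hm.dotProduct_mulVec_nonneg γ
  rw [Complex.le_def] at hcC
  have hre : 0 ≤ cC.re := by simpa using hcC.1
  have him : cC.im = 0 := by simpa using hcC.2.symm
  have hcCre : cC = ((cC.re : ℝ) : ℂ) := by
    apply Complex.ext <;> simp [him]
  refine ⟨γ, cC.re, hγn, hre, ?_⟩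
  rw [hsplit, hmγ, aux_smul_vecMulVec, ← hcCre]
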